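/- Let n and d be positive integers, ℓ a Kupisch series of type Ã_{n-1}, f(i) = i - ℓ(i) - d + 1, and I = { i ∈ ℤ : (i mod n) ∈ J }. Then there exist an integer s ≥ 1 and an integer t such that f^s(i) = i + t·n for every i ∈ I, where f^s denotes the s-fold iterate of f. -/

import Mathlib

/-!
Since `ℓ` drops by at most one per step, `f` is monotone, and since `ℓ` is `n`-periodic, `f`
commutes with translation by `n`; both properties pass to every iterate. With `s = n!` every
periodic point of `f̄` on the `n`-element set `ℤ/nℤ` is fixed by `f̄^s`, so for `i ∈ I` the
displacement `f^s i - i` is a multiple of `n`. The displacement of a monotone map commuting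
with translation by `n` varies by less than `n`, hence it is constant on `I`.
-/

/-- The set of periodic points of the induced map `f̄ : ℤ/nℤ → ℤ/nℤ`. -/
def Jset (n : ℕ) (fbar : ZMod n → ZMod n) : Set (ZMod n) :=
  {j | ∃ N : ℕ, 1 ≤ N ∧ fbar^[N] j = j}

/-- The set of integers whose residue mod `n` lies in `J`. -/
def Iset (n : ℕ) (fbar : ZMod n → ZMod n) : Set ℤ :=
  {i | (i : ZMod n) ∈ Jset n fbar}

open Function
open scoped Nat

theorem Jset_eq_periodicPts (n : ℕ) (fbar : ZMod n → ZMod n) : Jset n fbar = periodicPts fbar :=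
  rfl

namespace Int

variable {g : ℤ → ℤ} {n : ℤ}

theorem periodic_sub_self_of_commute_add (h : Function.Commute g (· + n)) :
    Periodic (fun x ↦ g x - x) n :=
  fun x ↦ by simp only [h.eq x]; ring

theorem sub_self_lt_sub_self_add_of_monotone (hn : 0 < n) (hg : Monotone g)
    (hper : Periodic (fun x ↦ g x - x) n) (i j : ℤ) : g i - i < g j - j + n := by
  set j' := j - (j - i) / n * n
  have hdisp : g j' - j' = g j - j := hper.sub_int_mul_eq _
  have hj' : j' = i + (j - i) % n := by rw [Int.emod_def]; ring
  have hlo : i ≤ j' := by have := Int.emod_nonneg (j - i) hn.ne'; omega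
  have hhi : j' < i + n := by have := Int.emod_lt_of_pos (j - i) hn; omega
  have hmono := hg hlo
  omega

theorem sub_self_eq_of_monotone_of_modEq (hn : 0 < n) (hg : Monotone g)
    (hper : Periodic (fun x ↦ g x - x) n) {i j : ℤ} (hi : g i ≡ i [ZMOD n])
    (hj : g j ≡ j [ZMOD n]) : g i - i = g j - j := by
  have hdvd : n ∣ (g i - i) - (g j - j) := dvd_sub hi.symm.dvd hj.symm.dvd
  have hij := sub_self_lt_sub_self_add_of_monotone hn hg hper i j
  have hji := sub_self_lt_sub_self_add_of_monotone hn hg hper j i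
  exact sub_eq_zero.mp (Int.eq_zero_of_abs_lt_dvd hdvd (abs_sub_lt_iff.mpr ⟨by omega, by omega⟩))

end Int

theorem iterate_factorial_modEq_of_mem_periodicPts {n : ℕ} [NeZero n] {f : ℤ → ℤ}
    {fbar : ZMod n → ZMod n} (hlift : Semiconj ((↑) : ℤ → ZMod n) f fbar) {i : ℤ}
    (hi : (i : ZMod n) ∈ periodicPts fbar) : f^[n !] i ≡ i [ZMOD n] := by
  have hfix : fbar^[n !] i = i := by
    simpa only [ZMod.card] using (isPeriodicPt_factorial_card_of_mem_periodicPts hi).eq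
  rw [← ZMod.intCast_eq_intCast_iff, (hlift.iterate_right _).eq, hfix]

theorem f_iterate_translation_on_I_general (n d : ℕ) (hn : 0 < n) (ℓ : ℤ → ℤ)
    (hK2 : ∀ i : ℤ, ℓ i ≤ ℓ (i - 1) + 1)
    (hKper : ∀ i : ℤ, ℓ (i + n) = ℓ i)
    (f : ℤ → ℤ) (hf : ∀ i : ℤ, f i = i - ℓ i - d + 1)
    (fbar : ZMod n → ZMod n)
    (hfbar : ∀ i : ℤ, fbar (i : ZMod n) = ((f i : ℤ) : ZMod n)) :
    ∃ s : ℕ, 1 ≤ s ∧ ∃ t : ℤ, ∀ i ∈ Iset n fbar, f^[s] i = i + t * n := by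
  have : NeZero n := ⟨hn.ne'⟩
  have hmono : Monotone f := monotone_int_of_le_succ fun i ↦ by
    have := hK2 (i + 1)
    rw [add_sub_cancel_right] at this
    rw [hf, hf]
    omega
  have hcomm : Function.Commute f (· + (n : ℤ)) := fun x ↦ by simp only [hf, hKper]; ring
  have hper := Int.periodic_sub_self_of_commute_add (hcomm.iterate_left (n !))
  have hmod : ∀ i ∈ Iset n fbar, f^[n !] i ≡ i [ZMOD n] := fun i hi ↦
    iterate_factorial_modEq_of_mem_periodicPts (fun x ↦ (hfbar x).symm)
      (Jset_eq_periodicPts n fbar ▸ hi)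
  refine ⟨n !, Nat.factorial_pos n, ?_⟩
  rcases (Iset n fbar).eq_empty_or_nonempty with hI | ⟨i₀, hi₀⟩
  · exact ⟨0, by simp [hI]⟩
  obtain ⟨t, ht⟩ := (hmod i₀ hi₀).symm.dvd
  refine ⟨t, fun i hi ↦ ?_⟩
  have hdisp := Int.sub_self_eq_of_monotone_of_modEq (by exact_mod_cast hn) (hmono.iterate _)
    hper (hmod i hi) (hmod i₀ hi₀)
  linear_combination hdisp + ht

/-- there exist `s ≥ 1` and `t ∈ ℤ` with `f^[s] i = i + t * n`
for all `i ∈ I`. -/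
theorem f_iterate_translation_on_I (n d : ℕ) (hn : 0 < n) (hd : 0 < d) (ℓ : ℤ → ℤ)
    (hK1 : ∀ i : ℤ, 1 ≤ ℓ i) (hK2 : ∀ i : ℤ, ℓ i ≤ ℓ (i - 1) + 1)
    (hKper : ∀ i : ℤ, ℓ (i + n) = ℓ i)
    (f : ℤ → ℤ) (hf : ∀ i : ℤ, f i = i - ℓ i - d + 1)
    (fbar : ZMod n → ZMod n)
    (hfbar : ∀ i : ℤ, fbar (i : ZMod n) = ((f i : ℤ) : ZMod n)) :
    ∃ s : ℕ, 1 ≤ s ∧ ∃ t : ℤ, ∀ i ∈ Iset n fbar, f^[s] i = i + t * n :=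
  f_iterate_translation_on_I_general n d hn ℓ hK2 hKper f hf fbar hfbar
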